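/- arXiv:1003.1880 — 2 statements merged into one kernel-verified Lean document; each statement's English description precedes it below -/
import Mathlib

section
/- Let Ω ⊂ ℂ be a bounded smooth domain, a, ψ, ψ₀ ∈ C²(closure(Ω)) with ψ = ψ₀ on ∂Ω, Δψ₀ = 0 in Ω, and −Δψ + qψ = 0 in Ω for a continuous q. Then ∫_{∂Ω} a (∂ψ/∂ν − ∂ψ₀/∂ν) ds = 2i ∫_{∂Ω} a (∂̄ψ − ∂̄ψ₀), where the right-hand side is a contour integral of the 1-form a(∂z̄ψ − ∂z̄ψ₀) dz̄ over ∂Ω oriented counterclockwise. -/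
open Complex MeasureTheory

noncomputable def dxC (f : ℂ → ℂ) (z : ℂ) : ℂ := fderiv ℝ f z 1
noncomputable def dyC (f : ℂ → ℂ) (z : ℂ) : ℂ := fderiv ℝ f z Complex.I
noncomputable def dzbar (f : ℂ → ℂ) (z : ℂ) : ℂ := (dxC f z + Complex.I * dyC f z) / 2
noncomputable def lapC (f : ℂ → ℂ) (z : ℂ) : ℂ := dxC (dxC f) z + dyC (dyC f) z

/-!
The identity holds pointwise along the boundary, without Green's formula. For `f = ψ - ψ₀` and
`w = γ'(t)`, `2i ∂̄f · w̄ = (∂ₓf · Im w - ∂_y f · Re w) + i Df(w)`: the normal derivative plus `i`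
times the tangential derivative. Since `f` vanishes on `∂Ω`, its tangential derivative
`Df(γ'(t)) = (f ∘ γ)'(t)` vanishes at every interior parameter `t ∈ (0, 1)`.
-/

lemma fderiv_apply_eq_re_mul_dxC_add_im_mul_dyC (f : ℂ → ℂ) (z w : ℂ) :
    fderiv ℝ f z w = (w.re : ℂ) * dxC f z + (w.im : ℂ) * dyC f z := by
  have hw : w = w.re • (1 : ℂ) + w.im • I := by simp [real_smul, re_add_im]
  conv_lhs => rw [hw, map_add, map_smul, map_smul]
  rw [dxC, dyC, real_smul, real_smul]

lemma two_mul_I_mul_dzbar_mul_conj (f : ℂ → ℂ) (z w : ℂ) :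
    2 * I * dzbar f z * (starRingEnd ℂ) w
      = dxC f z * (w.im : ℂ) - dyC f z * (w.re : ℂ) + I * fderiv ℝ f z w := by
  have hconj : (starRingEnd ℂ) w = (w.re : ℂ) - (w.im : ℂ) * I := by
    apply Complex.ext <;> simp
  rw [fderiv_apply_eq_re_mul_dxC_add_im_mul_dyC, dzbar, hconj]
  linear_combination
    (dyC f z * (w.re : ℂ) - dxC f z * (w.im : ℂ) - I * dyC f z * (w.im : ℂ)) * I_sq

lemma fderiv_apply_deriv_eq_zero_of_eventuallyEq_const {f : ℂ → ℂ} {γ : ℝ → ℂ} {t : ℝ}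
    {c : ℂ} (hf : DifferentiableAt ℝ f (γ t)) (hγ : DifferentiableAt ℝ γ t)
    (hconst : f ∘ γ =ᶠ[nhds t] fun _ => c) :
    fderiv ℝ f (γ t) (deriv γ t) = 0 := by
  rw [← fderiv_comp_deriv t hf hγ, hconst.deriv_eq, deriv_const]

lemma normal_deriv_eq_two_mul_I_mul_dzbar_mul_conj {f : ℂ → ℂ} {γ : ℝ → ℂ} {t : ℝ} {c : ℂ}
    (hf : DifferentiableAt ℝ f (γ t)) (hγ : DifferentiableAt ℝ γ t)
    (hconst : f ∘ γ =ᶠ[nhds t] fun _ => c) :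
    dxC f (γ t) * ((deriv γ t).im : ℂ) - dyC f (γ t) * ((deriv γ t).re : ℂ)
      = 2 * I * dzbar f (γ t) * (starRingEnd ℂ) (deriv γ t) := by
  rw [two_mul_I_mul_dzbar_mul_conj,
    fderiv_apply_deriv_eq_zero_of_eventuallyEq_const hf hγ hconst, mul_zero, add_zero]

section sub

variable {f g : ℂ → ℂ} {z : ℂ}

lemma dxC_sub (hf : DifferentiableAt ℝ f z) (hg : DifferentiableAt ℝ g z) :
    dxC (f - g) z = dxC f z - dxC g z := by
  simp only [dxC, fderiv_sub hf hg, sub_apply]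

lemma dyC_sub (hf : DifferentiableAt ℝ f z) (hg : DifferentiableAt ℝ g z) :
    dyC (f - g) z = dyC f z - dyC g z := by
  simp only [dyC, fderiv_sub hf hg, sub_apply]

lemma dzbar_sub (hf : DifferentiableAt ℝ f z) (hg : DifferentiableAt ℝ g z) :
    dzbar (f - g) z = dzbar f z - dzbar g z := by
  rw [dzbar, dzbar, dzbar, dxC_sub hf hg, dyC_sub hf hg]
  ring

end sub

theorem normal_derivative_eq_dbar_contour_general
    (Ω : Set ℂ)
    (γ : ℝ → ℂ) (hγ : ContDiff ℝ 1 γ)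
    (hγim : γ '' Set.Icc (0 : ℝ) 1 = frontier Ω)
    (U : Set ℂ) (hU : IsOpen U) (hUc : closure Ω ⊆ U)
    (a ψ ψ₀ : ℂ → ℂ)
    (hψ : ContDiffOn ℝ 2 ψ U) (hψ₀ : ContDiffOn ℝ 2 ψ₀ U)
    (hbd : ∀ z ∈ frontier Ω, ψ z = ψ₀ z) :
    (∫ t in (0:ℝ)..1,
        a (γ t) *
          ((dxC ψ (γ t) - dxC ψ₀ (γ t)) * ((deriv γ t).im : ℂ)
            - (dyC ψ (γ t) - dyC ψ₀ (γ t)) * ((deriv γ t).re : ℂ)))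
      = 2 * Complex.I *
          ∫ t in (0:ℝ)..1,
            a (γ t) * (dzbar ψ (γ t) - dzbar ψ₀ (γ t)) * (starRingEnd ℂ) (deriv γ t) := by
  have hfrontier {s : ℝ} (hs : s ∈ Set.Ioo 0 1) : γ s ∈ frontier Ω :=
    hγim ▸ Set.mem_image_of_mem γ (Set.Ioo_subset_Icc_self hs)
  have hdiff {f : ℂ → ℂ} (hf : ContDiffOn ℝ 2 f U) {s : ℝ} (hs : s ∈ Set.Ioo 0 1) :
      DifferentiableAt ℝ f (γ s) :=
    (hf.differentiableOn two_ne_zero).differentiableAt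
      (hU.mem_nhds (hUc (frontier_subset_closure (hfrontier hs))))
  rw [← intervalIntegral.integral_const_mul, intervalIntegral.integral_of_le zero_le_one,
    intervalIntegral.integral_of_le zero_le_one, integral_Ioc_eq_integral_Ioo,
    integral_Ioc_eq_integral_Ioo]
  refine setIntegral_congr_fun measurableSet_Ioo fun t ht => ?_
  have hvanish : (ψ - ψ₀) ∘ γ =ᶠ[nhds t] fun _ => 0 := by
    filter_upwards [Ioo_mem_nhds ht.1 ht.2] with s hs
    simp [hbd _ (hfrontier hs)]
  have key := normal_deriv_eq_two_mul_I_mul_dzbar_mul_conj ((hdiff hψ ht).sub (hdiff hψ₀ ht))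
    (hγ.differentiable one_ne_zero t) hvanish
  rw [dxC_sub (hdiff hψ ht) (hdiff hψ₀ ht), dyC_sub (hdiff hψ ht) (hdiff hψ₀ ht),
    dzbar_sub (hdiff hψ ht) (hdiff hψ₀ ht)] at key
  simp only [key]
  ring

/-- key Lemma: for a, ψ, ψ₀ C² on a neighborhood of closure Ω with
ψ = ψ₀ on ∂Ω, Δψ₀ = 0 and −Δψ + qψ = 0 in Ω,
∫_{∂Ω} a (∂ψ/∂ν − ∂ψ₀/∂ν) ds = 2i ∫_{∂Ω} a (∂̄ψ − ∂̄ψ₀).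
The boundary is parametrized counterclockwise by the C¹ loop γ; along γ,
∂f/∂ν ds = (∂x f · (γ')_y − ∂y f · (γ')_x) dt and dz̄ pulls back to conj(γ'(t)) dt. -/
theorem normal_derivative_eq_dbar_contour
    (Ω : Set ℂ) (hΩo : IsOpen Ω) (hΩc : IsConnected Ω)
    (hΩb : Bornology.IsBounded Ω)
    (γ : ℝ → ℂ) (hγ : ContDiff ℝ 1 γ) (hγp : γ 0 = γ 1)
    (hγim : γ '' Set.Icc (0 : ℝ) 1 = frontier Ω)
    (U : Set ℂ) (hU : IsOpen U) (hUc : closure Ω ⊆ U)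
    (a ψ ψ₀ : ℂ → ℂ) (q : ℂ → ℂ) (hq : Continuous q)
    (ha : ContDiffOn ℝ 2 a U) (hψ : ContDiffOn ℝ 2 ψ U) (hψ₀ : ContDiffOn ℝ 2 ψ₀ U)
    (hbd : ∀ z ∈ frontier Ω, ψ z = ψ₀ z)
    (hψ₀h : ∀ z ∈ Ω, lapC ψ₀ z = 0)
    (hψs : ∀ z ∈ Ω, -lapC ψ z + q z * ψ z = 0) :
    (∫ t in (0:ℝ)..1,
        a (γ t) *
          ((dxC ψ (γ t) - dxC ψ₀ (γ t)) * ((deriv γ t).im : ℂ)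
            - (dyC ψ (γ t) - dyC ψ₀ (γ t)) * ((deriv γ t).re : ℂ)))
      = 2 * Complex.I *
          ∫ t in (0:ℝ)..1,
            a (γ t) * (dzbar ψ (γ t) - dzbar ψ₀ (γ t)) * (starRingEnd ℂ) (deriv γ t) :=
  normal_derivative_eq_dbar_contour_general Ω γ hγ hγim U hU hUc a ψ ψ₀ hψ hψ₀ hbd
end

section
/- Let b : ℂ → ℂ be continuous and compactly supported, w ∈ ℂ fixed, and suppose μ(w,·) solves the integral equation μ(w,λ) = 1 + (1/(8π²i)) ∫_ℂ (b(λ')/((λ'−λ)λ̄')) e^{λ̄'w̄ − λ'w} conj(μ(w,λ')) dλ' ∧ dλ̄' with μ(w,·) bounded. Then λ ↦ μ(w,λ) − 1 tends to 0 as |λ| → ∞. -/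
/-!
For `λ` outside a ball `closedBall 0 R ⊇ supp b` we have `‖λ' - λ‖ ≥ ‖λ‖ - R` on `supp b`, so
the integral term is at most `M (∫ ‖b z‖ / ‖z‖) / (‖λ‖ - R)` up to the constant prefactor. The
integral is finite because `‖z‖⁻¹` is locally integrable in real dimension `2 > 1`. The bound
needs no measurability of `μ`: a non-integrable integrand has Bochner integral `0`.
-/

open Complex MeasureTheory Filter ComplexConjugate

theorem locallyIntegrable_norm_inv {E : Type*} [NormedAddCommGroup E] [NormedSpace ℝ E]
    [FiniteDimensional ℝ E] [MeasurableSpace E] [BorelSpace E]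
    (μ : Measure E) [μ.IsAddHaarMeasure] (hE : 1 < Module.finrank ℝ E) :
    LocallyIntegrable (fun x : E => ‖x‖⁻¹) μ :=
  locallyIntegrable_of_norm_le_rpow (C := 1) (α := 1) hE.le (by exact_mod_cast hE)
    (ae_of_all _ fun x => by simp [Real.rpow_neg_one])
    continuous_norm.measurable.inv.aestronglyMeasurable

theorem HasCompactSupport.integrable_norm_mul_norm_inv {E : Type*} [NormedAddCommGroup E]
    [NormedSpace ℝ E] [FiniteDimensional ℝ E] [MeasurableSpace E] [BorelSpace E]
    (μ : Measure E) [μ.IsAddHaarMeasure] (hE : 1 < Module.finrank ℝ E)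
    {F : Type*} [NormedAddCommGroup F] {b : E → F} (hb : Continuous b) (hbs : HasCompactSupport b) :
    Integrable (fun x => ‖b x‖ * ‖x‖⁻¹) μ :=
  (locallyIntegrable_norm_inv μ hE).integrable_smul_left_of_hasCompactSupport hb.norm hbs.norm

theorem norm_exp_conj_sub_self (z : ℂ) : ‖exp (conj z - z)‖ = 1 := by
  simp [Complex.norm_exp]

theorem norm_div_sub_mul_conj_le {b : ℂ → ℂ} {R : ℝ}
    (hR : tsupport b ⊆ Metric.closedBall 0 R) {lam : ℂ} (hlam : R < ‖lam‖) (z : ℂ) :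
    ‖b z / ((z - lam) * conj z)‖ ≤ (‖lam‖ - R)⁻¹ * (‖b z‖ * ‖z‖⁻¹) := by
  by_cases hbz : b z = 0
  · simp [hbz]
  have hz : ‖z‖ ≤ R := mem_closedBall_zero_iff.1 (hR (subset_tsupport b hbz))
  have hdist : ‖lam‖ - R ≤ ‖z - lam‖ := by
    have := norm_sub_norm_le lam z
    rw [norm_sub_rev] at this
    linarith
  rw [norm_div, norm_mul, Complex.norm_conj, div_eq_mul_inv, mul_inv]
  calc ‖b z‖ * (‖z - lam‖⁻¹ * ‖z‖⁻¹) ≤ ‖b z‖ * ((‖lam‖ - R)⁻¹ * ‖z‖⁻¹) := by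
        gcongr
    _ = _ := by ring

theorem norm_integral_div_sub_mul_conj_le {b g : ℂ → ℂ} {R M : ℝ}
    (hR : tsupport b ⊆ Metric.closedBall 0 R) (hg : ∀ z, ‖g z‖ ≤ M)
    (hint : Integrable (fun z => ‖b z‖ * ‖z‖⁻¹)) {lam : ℂ} (hlam : R < ‖lam‖) :
    ‖∫ z, b z / ((z - lam) * conj z) * g z‖ ≤
      (‖lam‖ - R)⁻¹ * (M * ∫ z, ‖b z‖ * ‖z‖⁻¹) := by
  rw [← integral_const_mul, ← integral_const_mul]
  refine norm_integral_le_of_norm_le ((hint.const_mul M).const_mul _) (ae_of_all _ fun z => ?_)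
  rw [norm_mul]
  have hM : 0 ≤ M := (norm_nonneg _).trans (hg 0)
  calc ‖b z / ((z - lam) * conj z)‖ * ‖g z‖
      ≤ (‖lam‖ - R)⁻¹ * (‖b z‖ * ‖z‖⁻¹) * M := by
        gcongr
        · exact norm_div_sub_mul_conj_le hR hlam z
        · exact hg z
    _ = _ := by ring

theorem tendsto_zero_of_norm_le_mul_inv_sub {E F : Type*} [Norm E] [SeminormedAddGroup F]
    {f : E → F} {C R : ℝ} (hf : ∀ x, R < ‖x‖ → ‖f x‖ ≤ C * (‖x‖ - R)⁻¹) :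
    Tendsto f (comap (fun x => ‖x‖) atTop) (nhds 0) := by
  have hnorm : Tendsto (fun x : E => ‖x‖) (comap (fun x => ‖x‖) atTop) atTop := tendsto_comap
  have hdecay : Tendsto (fun t : ℝ => C * (t - R)⁻¹) atTop (nhds 0) := by
    simpa [sub_eq_add_neg] using
      (tendsto_atTop_add_const_right atTop (-R) tendsto_id).inv_tendsto_atTop.const_mul C
  rw [tendsto_zero_iff_norm_tendsto_zero]
  refine squeeze_zero' (Eventually.of_forall fun _ => norm_nonneg _) ?_ (hdecay.comp hnorm)
  filter_upwards [hnorm.eventually_gt_atTop R] with x hx using hf x hx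

/-- if b is continuous with compact support and μ(w,·) is a bounded
solution of the integral equation
μ(w,λ) = 1 + (1/(8π²i)) ∫ (b(λ')/((λ'−λ)λ̄')) e^{λ̄'w̄−λ'w} conj(μ(w,λ')) dλ'∧dλ̄'
(with dλ'∧dλ̄' = −2i dA), then μ(w,λ) − 1 → 0 as |λ| → ∞. -/
theorem mu_tendsto_one_at_infinity
    (b : ℂ → ℂ) (hb : Continuous b) (hbs : HasCompactSupport b)
    (w : ℂ) (μ : ℂ → ℂ) (M : ℝ)
    (hM : ∀ lam : ℂ, ‖μ lam‖ ≤ M)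
    (heq : ∀ lam : ℂ, μ lam =
      1 + 1 / (8 * (Real.pi : ℂ) ^ 2 * Complex.I) *
        ((-2 * Complex.I) *
          ∫ lam' : ℂ,
            b lam' / ((lam' - lam) * (starRingEnd ℂ) lam')
              * Complex.exp ((starRingEnd ℂ) lam' * (starRingEnd ℂ) w - lam' * w)
              * (starRingEnd ℂ) (μ lam'))) :
    Tendsto (fun lam : ℂ => μ lam - 1) (comap (fun z : ℂ => ‖z‖) atTop) (nhds 0) := by
  obtain ⟨R, hR⟩ := hbs.isCompact.isBounded.subset_closedBall 0
  set c : ℂ := 1 / (8 * (Real.pi : ℂ) ^ 2 * Complex.I) * (-2 * Complex.I)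
  set C : ℝ := ‖c‖ * (M * ∫ z, ‖b z‖ * ‖z‖⁻¹)
  have hint := hbs.integrable_norm_mul_norm_inv volume (by simp) hb
  have hg : ∀ z, ‖exp (conj z * conj w - z * w) * conj (μ z)‖ ≤ M := fun z => by
    rw [← map_mul, norm_mul, norm_exp_conj_sub_self, Complex.norm_conj, one_mul]
    exact hM z
  have hbound (lam : ℂ) (hlam : R < ‖lam‖) : ‖μ lam - 1‖ ≤ C * (‖lam‖ - R)⁻¹ := by
    have hmu : μ lam - 1 = c * ∫ z, b z / ((z - lam) * conj z) *
        (exp (conj z * conj w - z * w) * conj (μ z)) := by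
      simp only [heq lam, ← mul_assoc]
      ring
    rw [hmu, norm_mul]
    calc ‖c‖ * ‖∫ z, b z / ((z - lam) * conj z) * (exp (conj z * conj w - z * w) * conj (μ z))‖
        ≤ ‖c‖ * ((‖lam‖ - R)⁻¹ * (M * ∫ z, ‖b z‖ * ‖z‖⁻¹)) := by
          gcongr
          exact norm_integral_div_sub_mul_conj_le hR hg hint hlam
      _ = C * (‖lam‖ - R)⁻¹ := by ring
  exact tendsto_zero_of_norm_le_mul_inv_sub hbound
end
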